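/- (Calderón–Zygmund decomposition for size.) Let n ∈ ℤ, let 𝐏_n be a convex collection of lacunary tiles, and let a : 𝐏_n → [0,∞) satisfy ‖a‖_{size*(𝐏_n)} ≤ 2ⁿ. Then there exists a disjoint partition 𝐏_n = ⋃_{T∈𝐓_n} T ∪ 𝐏_{n−1}, where 𝐏_{n−1} is a convex collection of tiles with ‖a‖_{size*(𝐏_{n−1})} ≤ 2^{n−1}, and 𝐓_n is a collection of convex trees with pairwise disjoint spatial intervals I_T such that 2^{n−1} ≤ ‖a‖_{size(T)} ≤ ‖a‖_{size*(T)} ≤ 2ⁿ for every T ∈ 𝐓_n. -/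

import Mathlib

open MeasureTheory Set

noncomputable section

namespace Dyadic

/-- A dyadic interval/lacunary tile: `I = [j·2^k, (j+1)·2^k)` with `-M ≤ k ≤ M`,
`I ⊆ [0, 2^M)`.  Lacunary tiles are in bijection with dyadic intervals, so we
identify the tile `P⁺(I) = I × [1/|I|, 2/|I|)` with the data of `I`. -/
structure Tile (M : ℕ) where
  j : ℤ
  k : ℤ
  hk_lb : -(M : ℤ) ≤ k
  hk_ub : k ≤ (M : ℤ)
  hj : 0 ≤ j
  hsub : ((j : ℝ) + 1) * 2 ^ k ≤ 2 ^ (M : ℤ)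

variable {M : ℕ}

/-- The side length `|I_P| = 2^k` of the spatial interval of the tile. -/
def Tile.len (P : Tile M) : ℝ := 2 ^ P.k

/-- The spatial interval `I_P` of the tile. -/
def Tile.ival (P : Tile M) : Set ℝ :=
  Ico ((P.j : ℝ) * 2 ^ P.k) (((P.j : ℝ) + 1) * 2 ^ P.k)

/-- The order `P ≤′ Q` on lacunary tiles: `I_P ⊆ I_Q`. -/
def Tile.le (P Q : Tile M) : Prop := P.ival ⊆ Q.ival

/-- A (lacunary) tree: a collection of tiles together with a top tile. -/
structure Tree (M : ℕ) where
  tiles : Set (Tile M)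
  top : Tile M
  top_mem : top ∈ tiles
  le_top : ∀ P ∈ tiles, P.le top

/-- `|I_T|`, the length of the spatial interval of the top of the tree. -/
def Tree.len (T : Tree M) : ℝ := T.top.len

/-- A collection of tiles is convex if `P₁ ≤′ P ≤′ P₂` with `P₁, P₂` in the
collection implies `P` is in the collection. -/
def IsConvex (PP : Set (Tile M)) : Prop :=
  ∀ P₁ ∈ PP, ∀ P₂ ∈ PP, ∀ P : Tile M, P₁.le P → P.le P₂ → P ∈ PP

/-- The size `‖a‖_{size(T)} = (1/|I_T|) Σ_{P ∈ T} a(P)` of `a` on a tree `T`. -/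
def treeSize (a : Tile M → ℝ) (T : Tree M) : ℝ :=
  (∑ᶠ P ∈ T.tiles, a P) / T.len

/-- The maximal size `‖a‖_{size*(PP)}`: the supremum of `‖a‖_{size(T)}` over all
convex trees `T ⊆ PP` (by convention `0` if there are none). -/
def maxSize (a : Tile M → ℝ) (PP : Set (Tile M)) : ℝ :=
  sSup (insert 0 {s : ℝ | ∃ T : Tree M, T.tiles ⊆ PP ∧ IsConvex T.tiles ∧ s = treeSize a T})

/-- The complete tree `Tree(P) = {Q : Q ≤′ P}`. -/
def cTree (P : Tile M) : Set (Tile M) := {Q : Tile M | Q.le P}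

/-- A tree `T` is complete with respect to `PP` if `T = Tree(P_T) ∩ PP`. -/
def Tree.IsCompleteIn (T : Tree M) (PP : Set (Tile M)) : Prop :=
  T.tiles = cTree T.top ∩ PP

/-- `QQ` is an `α`-packing of the tree `T`: `QQ ⊆ T` and `Σ_{P ∈ QQ} |I_P| ≤ α|I_T|`. -/
def IsPacking (α : ℝ) (QQ : Set (Tile M)) (T : Tree M) : Prop :=
  QQ ⊆ T.tiles ∧ (∑ᶠ P ∈ QQ, Tile.len P) ≤ α * T.len

/-- `QQ` is a uniform `α`-packing of the tree `T`:
`Σ_{P ∈ QQ, I_P ⊆ J} |I_P| ≤ α|J|` for every dyadic interval `J`. -/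
def IsUniformPacking (α : ℝ) (QQ : Set (Tile M)) (T : Tree M) : Prop :=
  QQ ⊆ T.tiles ∧
    ∀ J : Tile M, (∑ᶠ P ∈ {P ∈ QQ | P.ival ⊆ J.ival}, Tile.len P) ≤ α * J.len

/-- Left half of the spatial interval. -/
def Tile.left (P : Tile M) : Set ℝ :=
  Ico ((P.j : ℝ) * 2 ^ P.k) (((P.j : ℝ) + 1 / 2) * 2 ^ P.k)

/-- Right half of the spatial interval. -/
def Tile.right (P : Tile M) : Set ℝ :=
  Ico (((P.j : ℝ) + 1 / 2) * 2 ^ P.k) (((P.j : ℝ) + 1) * 2 ^ P.k)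

/-- The (mother) Haar wavelet `φ_P = |I_P|^{-1/2}(χ_{I_l} - χ_{I_r})`. -/
def Tile.haar (P : Tile M) : ℝ → ℝ := fun x =>
  (Real.sqrt P.len)⁻¹ * (P.left.indicator 1 x - P.right.indicator 1 x)

/-- The Haar (wavelet) coefficient `Wf(P) = ⟨f, φ_P⟩`. -/
def waveCoeff (f : ℝ → ℝ) (P : Tile M) : ℝ := ∫ x, f x * P.haar x

/-- The average `[f]_{I_P} = (1/|I_P|)∫_{I_P} f`. -/
def tileAvg (f : ℝ → ℝ) (P : Tile M) : ℝ := (∫ x in P.ival, f x) / P.len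

/-- The mean `‖f‖_{mean(P)} = (1/|I_P|)∫_{I_P} |f|`. -/
def tileMean (f : ℝ → ℝ) (P : Tile M) : ℝ := (∫ x in P.ival, |f x|) / P.len

/-- The maximal mean `‖f‖_{mean*(PP)} = sup_{P ∈ PP} ‖f‖_{mean(P)}`. -/
def maxMean (f : ℝ → ℝ) (PP : Set (Tile M)) : ℝ :=
  sSup (insert 0 (tileMean f '' PP))

/-- The dyadic BMO norm `‖f‖_{BMO} = ‖|Wf|²‖_{size*(PP⁺)}^{1/2}`. -/
def bmoNorm (M : ℕ) (f : ℝ → ℝ) : ℝ :=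
  Real.sqrt (maxSize (fun P : Tile M => waveCoeff f P ^ 2) univ)

/-- The grid interval `[j·2^{-M}, (j+1)·2^{-M})` at the finest scale. -/
def gridIval (M : ℕ) (j : ℤ) : Set ℝ :=
  Ico ((j : ℝ) * 2 ^ (-(M : ℤ))) (((j : ℝ) + 1) * 2 ^ (-(M : ℤ)))

/-- A dyadic test function: supported on `[0, 2^M)` and constant on every dyadic
interval of length `2^{-M}`. -/
def IsTestFun (M : ℕ) (f : ℝ → ℝ) : Prop :=
  (∀ x : ℝ, x ∉ Ico (0 : ℝ) (2 ^ (M : ℤ)) → f x = 0) ∧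
    ∀ j : ℤ, ∀ x ∈ gridIval M j, ∀ y ∈ gridIval M j, f x = f y

/-- The `L²` norm. -/
def l2Norm (f : ℝ → ℝ) : ℝ := Real.sqrt (∫ x, f x ^ 2)

/-- The `L^∞` norm (as a supremum of values; adequate for test functions). -/
def supNorm (f : ℝ → ℝ) : ℝ := ⨆ x : ℝ, |f x|

/-- The weak `L^r` quasinorm `sup_{λ>0} λ |{|h| ≥ λ}|^{1/r}`. -/
def weakNorm (r : ℝ) (h : ℝ → ℝ) : ℝ :=
  sSup {s : ℝ | ∃ l : ℝ, 0 < l ∧ s = l * (volume {x : ℝ | l ≤ |h x|}).toReal ^ (1 / r)}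

/-- The phase space projection `Π_T f = Σ_{P ∈ T} ⟨f, φ_P⟩ φ_P` onto a tree. -/
def treeProj (T : Tree M) (f : ℝ → ℝ) : ℝ → ℝ := fun x =>
  ∑ᶠ P ∈ T.tiles, waveCoeff f P * P.haar x

/-- The high-low paraproduct `π_hl(f,g) = Σ_P Wf(P) [g]_P φ_P`. -/
def paraHL (M : ℕ) (f g : ℝ → ℝ) : ℝ → ℝ := fun x =>
  ∑ᶠ P : Tile M, waveCoeff f P * tileAvg g P * P.haar x

/-- The low-high paraproduct `π_lh(f,g) = Σ_P [f]_P Wg(P) φ_P`. -/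
def paraLH (M : ℕ) (f g : ℝ → ℝ) : ℝ → ℝ := fun x =>
  ∑ᶠ P : Tile M, tileAvg f P * waveCoeff g P * P.haar x

/-- The high-high paraproduct `π_hh(f,g) = Σ_P Wf(P) Wg(P) χ_{I_P}/|I_P|`. -/
def paraHH (M : ℕ) (f g : ℝ → ℝ) : ℝ → ℝ := fun x =>
  ∑ᶠ P : Tile M, waveCoeff f P * waveCoeff g P * P.ival.indicator 1 x / P.len

/-- The constant function `1` on `[0, 2^M)`. -/
def oneFn (M : ℕ) : ℝ → ℝ := (Ico (0 : ℝ) (2 ^ (M : ℤ))).indicator 1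

/-- A perfect dyadic Calderón–Zygmund operator, recorded via its kernel `K` and
kernel constant `A₀`. -/
structure PDCZ (M : ℕ) where
  K : ℝ → ℝ → ℝ
  A₀ : ℝ
  hA₀ : 0 < A₀
  meas : Measurable (Function.uncurry K)
  bound : ∀ x y : ℝ, x ≠ y → |K x y| ≤ A₀ / |x - y|
  perfectX : ∀ I J : Tile M, Disjoint I.ival J.ival →
    ∀ x ∈ I.ival, ∀ x' ∈ I.ival, ∀ y ∈ J.ival, K x y = K x' y
  perfectY : ∀ I J : Tile M, Disjoint I.ival J.ival →
    ∀ x ∈ I.ival, ∀ x' ∈ I.ival, ∀ y ∈ J.ival, K y x = K y x'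
  diag : ∀ I : Tile M, I.k = -(M : ℤ) → ∀ x ∈ I.ival, ∀ y ∈ I.ival, K x y = 0
  corner₁ : ∀ x ∈ Ico (0 : ℝ) (2 ^ ((M : ℤ) - 1)),
    ∀ y ∈ Ico ((2 : ℝ) ^ ((M : ℤ) - 1)) (2 ^ (M : ℤ)), K x y = 0
  corner₂ : ∀ x ∈ Ico ((2 : ℝ) ^ ((M : ℤ) - 1)) (2 ^ (M : ℤ)),
    ∀ y ∈ Ico (0 : ℝ) (2 ^ ((M : ℤ) - 1)), K x y = 0

/-- `Tf(x) = ∫ K(x,y) f(y) dy`. -/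
def PDCZ.app (Op : PDCZ M) (f : ℝ → ℝ) : ℝ → ℝ := fun x => ∫ y, Op.K x y * f y

/-- The transpose `T*f(x) = ∫ K(y,x) f(y) dy`. -/
def PDCZ.appT (Op : PDCZ M) (f : ℝ → ℝ) : ℝ → ℝ := fun x => ∫ y, Op.K y x * f y

/-- Complex-valued Haar coefficient. -/
def waveCoeffC (b : ℝ → ℂ) (P : Tile M) : ℂ := ∫ x, b x * (P.haar x : ℂ)

/-- Complex-valued average. -/
def tileAvgC (b : ℝ → ℂ) (P : Tile M) : ℂ := (∫ x in P.ival, b x) / (P.len : ℂ)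

/-- BMO norm of a complex-valued function. -/
def bmoNormC (M : ℕ) (b : ℝ → ℂ) : ℝ :=
  Real.sqrt (maxSize (fun P : Tile M => ‖waveCoeffC b P‖ ^ 2) univ)

/-- Complex-valued dyadic test functions. -/
def IsTestFunC (M : ℕ) (b : ℝ → ℂ) : Prop :=
  (∀ x : ℝ, x ∉ Ico (0 : ℝ) (2 ^ (M : ℤ)) → b x = 0) ∧
    ∀ j : ℤ, ∀ x ∈ gridIval M j, ∀ y ∈ gridIval M j, b x = b y

/-- The operator applied to a complex-valued function. -/
def PDCZ.appC (Op : PDCZ M) (b : ℝ → ℂ) : ℝ → ℂ := fun x => ∫ y, (Op.K x y : ℂ) * b y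

/-!
Call a tile `P ∈ 𝐏_n` heavy if the complete tree `Tree(P) ∩ 𝐏_n` has size at least `2^{n-1}`,
and take for `𝐓_n` the complete trees topped by the maximal heavy tiles. Since dyadic intervals
are nested or disjoint, distinct maximal heavy tiles have disjoint intervals, hence so do the
trees. Every heavy tile lies below a maximal one, so a convex tree in the remainder `𝐏_{n-1}` has
a light top, and as `a ≥ 0` its size is at most that of the complete tree below its top, which is
`< 2^{n-1}`. The remainder is convex because the union of complete trees is downward closed
in `𝐏_n`.
-/

lemma Tile.len_pos (P : Tile M) : 0 < P.len := by
  unfold Tile.len; positivity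

lemma Tile.ext {P Q : Tile M} (hj : P.j = Q.j) (hk : P.k = Q.k) : P = Q := by
  cases P; cases Q; simp_all

lemma Tile.ival_eq_Ico (P : Tile M) : P.ival = Ico (P.j * P.len) ((P.j + 1) * P.len) := rfl

lemma Tile.mem_ival_iff {P : Tile M} {x : ℝ} : x ∈ P.ival ↔ ⌊x / P.len⌋ = P.j := by
  rw [Int.floor_eq_iff, le_div_iff₀ P.len_pos, div_lt_iff₀ P.len_pos]
  rfl

lemma Tile.ival_nonempty (P : Tile M) : P.ival.Nonempty :=
  ⟨P.j * P.len, Tile.mem_ival_iff.mpr (by simp [P.len_pos.ne'])⟩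

lemma Tile.eq_of_ival_eq {P Q : Tile M} (h : P.ival = Q.ival) : P = Q := by
  have hP : (P.j : ℝ) * P.len < (P.j + 1) * P.len := by nlinarith [P.len_pos]
  rw [P.ival_eq_Ico, Q.ival_eq_Ico, Ico_eq_Ico_iff (Or.inl hP)] at h
  have hlen : P.len = Q.len := by linear_combination h.2 - h.1
  have hk : P.k = Q.k := zpow_right_injective₀ two_pos (by norm_num) hlen
  rw [hlen] at h
  exact Tile.ext (by exact_mod_cast mul_right_cancel₀ Q.len_pos.ne' h.1) hk

/-- The interval of scale `2 ^ k'` containing `x` has index `⌊x / 2 ^ k⌋ / 2 ^ (k' - k)`, which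
depends only on the interval of scale `2 ^ k` containing `x`. -/
lemma Tile.le_of_mem_of_mem {P Q : Tile M} {x : ℝ} (hP : x ∈ P.ival) (hQ : x ∈ Q.ival)
    (hk : P.k ≤ Q.k) : P.ival ⊆ Q.ival := by
  obtain ⟨d, hd⟩ := Int.le.dest hk
  have hlen : ∀ y : ℝ, y / Q.len = y / P.len / ((2 ^ d : ℕ) : ℝ) := by
    intro y
    rw [div_div, Tile.len, Tile.len, ← hd, zpow_add₀ two_ne_zero]
    push_cast; rfl
  intro y hy
  rw [Tile.mem_ival_iff] at *
  rw [hlen, Int.floor_div_natCast, hy, ← hP, ← Int.floor_div_natCast, ← hlen, hQ]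

instance : PartialOrder (Tile M) where
  le := Tile.le
  le_refl _ := subset_rfl
  le_trans _ _ _ := Subset.trans
  le_antisymm _ _ hPQ hQP := Tile.eq_of_ival_eq (hPQ.antisymm hQP)

lemma Tile.le_or_le_of_not_disjoint {P Q : Tile M} (h : ¬Disjoint P.ival Q.ival) :
    P ≤ Q ∨ Q ≤ P := by
  obtain ⟨x, hP, hQ⟩ := not_disjoint_iff.mp h
  rcases le_total P.k Q.k with hk | hk
  · exact Or.inl (Tile.le_of_mem_of_mem hP hQ hk)
  · exact Or.inr (Tile.le_of_mem_of_mem hQ hP hk)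

lemma Tile.disjoint_of_maximal {p : Tile M → Prop} {P Q : Tile M} (hP : Maximal p P)
    (hQ : Maximal p Q) (hPQ : P ≠ Q) : Disjoint P.ival Q.ival := by
  by_contra h
  rcases Tile.le_or_le_of_not_disjoint h with hle | hle
  · exact hPQ (hP.eq_of_le hQ.prop hle)
  · exact hPQ (hQ.eq_of_le hP.prop hle).symm

lemma Tile.j_lt (P : Tile M) : P.j < 4 ^ M := by
  have hk : (2 : ℝ) ^ (-(M : ℤ)) ≤ P.len := zpow_le_zpow_right₀ one_le_two P.hk_lb
  have h : ((P.j : ℝ) + 1) * 2 ^ (-(M : ℤ)) ≤ 2 ^ (M : ℤ) :=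
    (mul_le_mul_of_nonneg_left hk (by positivity [P.hj])).trans P.hsub
  rw [zpow_neg, ← div_eq_mul_inv, div_le_iff₀ (by positivity), ← zpow_add₀ two_ne_zero,
    ← two_mul, zpow_mul, zpow_natCast] at h
  norm_num at h
  exact_mod_cast (lt_add_one _).trans_le h

instance : Finite (Tile M) := by
  let box : Set (ℤ × ℤ) := Icc 0 (4 ^ M) ×ˢ Icc (-(M : ℤ)) M
  have : Finite box := ((finite_Icc _ _).prod (finite_Icc _ _)).to_subtype
  refine Finite.of_injective
    (fun P : Tile M => (⟨(P.j, P.k), ⟨P.hj, P.j_lt.le⟩, P.hk_lb, P.hk_ub⟩ : box)) fun P Q h => ?_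
  obtain ⟨hj, hk⟩ := Prod.ext_iff.mp (congrArg Subtype.val h)
  exact Tile.ext hj hk

lemma Tree.ext {T T' : Tree M} (htiles : T.tiles = T'.tiles) (htop : T.top = T'.top) :
    T = T' := by
  cases T; cases T'; simp_all

instance : Finite (Tree M) :=
  Finite.of_injective (fun T : Tree M => (T.tiles, T.top)) fun _ _ h =>
    Tree.ext (Prod.ext_iff.mp h).1 (Prod.ext_iff.mp h).2

lemma finsum_mem_le_finsum_mem_of_subset {α : Type*} [Finite α] {f : α → ℝ} {s t : Set α}
    (hf : ∀ x, 0 ≤ f x) (hst : s ⊆ t) : ∑ᶠ x ∈ s, f x ≤ ∑ᶠ x ∈ t, f x := by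
  rw [← finsum_mem_add_sdiff hst t.toFinite]
  exact le_add_of_nonneg_right (finsum_nonneg fun x => finsum_nonneg fun _ => hf x)

lemma bddAbove_maxSize_set (a : Tile M → ℝ) (PP : Set (Tile M)) :
    BddAbove (insert 0
      {s : ℝ | ∃ T : Tree M, T.tiles ⊆ PP ∧ IsConvex T.tiles ∧ s = treeSize a T}) :=
  ((finite_range (treeSize a)).subset (by rintro _ ⟨T, -, -, rfl⟩; exact ⟨T, rfl⟩)).insert 0
    |>.bddAbove

lemma treeSize_le_maxSize (a : Tile M → ℝ) {PP : Set (Tile M)} {T : Tree M}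
    (hT : T.tiles ⊆ PP) (hconv : IsConvex T.tiles) : treeSize a T ≤ maxSize a PP :=
  le_csSup (bddAbove_maxSize_set a PP) (mem_insert_of_mem _ ⟨T, hT, hconv, rfl⟩)

lemma maxSize_le {a : Tile M → ℝ} {PP : Set (Tile M)} {c : ℝ} (hc : 0 ≤ c)
    (h : ∀ T : Tree M, T.tiles ⊆ PP → IsConvex T.tiles → treeSize a T ≤ c) :
    maxSize a PP ≤ c :=
  csSup_le (insert_nonempty _ _) <| forall_mem_insert.mpr
    ⟨hc, by rintro _ ⟨T, hT, hconv, rfl⟩; exact h T hT hconv⟩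

lemma maxSize_mono (a : Tile M → ℝ) {PP QQ : Set (Tile M)} (h : PP ⊆ QQ) :
    maxSize a PP ≤ maxSize a QQ :=
  csSup_le_csSup (bddAbove_maxSize_set a QQ) (insert_nonempty _ _)
    (insert_subset_insert fun _ ⟨T, hT, hconv, hs⟩ => ⟨T, hT.trans h, hconv, hs⟩)

lemma IsConvex.cTree_inter {PP : Set (Tile M)} (hconv : IsConvex PP) (P : Tile M) :
    IsConvex (cTree P ∩ PP) :=
  fun _ h₁ _ h₂ _ hle₁ hle₂ => ⟨le_trans hle₂ h₂.1, hconv _ h₁.2 _ h₂.2 _ hle₁ hle₂⟩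

def completeTreeSize (a : Tile M → ℝ) (PP : Set (Tile M)) (P : Tile M) : ℝ :=
  (∑ᶠ Q ∈ cTree P ∩ PP, a Q) / P.len

lemma treeSize_le_completeTreeSize {a : Tile M → ℝ} (ha : ∀ P, 0 ≤ a P) {PP : Set (Tile M)}
    {T : Tree M} (hT : T.tiles ⊆ PP) : treeSize a T ≤ completeTreeSize a PP T.top :=
  div_le_div_of_nonneg_right
    (finsum_mem_le_finsum_mem_of_subset ha fun P hP => ⟨T.le_top P hP, hT hP⟩) T.top.len_pos.le

namespace Tree.IsCompleteIn

variable {PP : Set (Tile M)} {T T' : Tree M}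

lemma subset (hT : T.IsCompleteIn PP) : T.tiles ⊆ PP := hT ▸ inter_subset_right

lemma isConvex (hT : T.IsCompleteIn PP) (hconv : IsConvex PP) : IsConvex T.tiles :=
  hT ▸ hconv.cTree_inter T.top

lemma treeSize_eq (hT : T.IsCompleteIn PP) (a : Tile M → ℝ) :
    treeSize a T = completeTreeSize a PP T.top := by
  rw [treeSize, hT]; rfl

lemma eq_of_top_eq (hT : T.IsCompleteIn PP) (hT' : T'.IsCompleteIn PP) (h : T.top = T'.top) :
    T = T' :=
  Tree.ext (by rw [hT, hT', h]) h

end Tree.IsCompleteIn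

section StoppingTrees

variable (a : Tile M → ℝ) (PP : Set (Tile M)) (c : ℝ)

def heavyTiles : Set (Tile M) := {P ∈ PP | c ≤ completeTreeSize a PP P}

def stoppingTrees : Set (Tree M) :=
  {T | Maximal (· ∈ heavyTiles a PP c) T.top ∧ T.IsCompleteIn PP}

def stoppingRemainder : Set (Tile M) := PP \ ⋃ T ∈ stoppingTrees a PP c, T.tiles

variable {a PP c}

lemma biUnion_stoppingTrees_subset : ⋃ T ∈ stoppingTrees a PP c, T.tiles ⊆ PP :=
  iUnion₂_subset fun _ hT => hT.2.subset

lemma stoppingTrees_pairwise_disjoint_top :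
    (stoppingTrees a PP c).Pairwise fun T T' => Disjoint T.top.ival T'.top.ival :=
  fun _ hT _ hT' hne => Tile.disjoint_of_maximal hT.1 hT'.1
    fun h => hne (hT.2.eq_of_top_eq hT'.2 h)

lemma stoppingTrees_pairwise_disjoint_tiles :
    (stoppingTrees a PP c).Pairwise fun T T' => Disjoint T.tiles T'.tiles := by
  intro T hT T' hT' hne
  refine disjoint_left.mpr fun P hP hP' => ?_
  obtain ⟨x, hx⟩ := P.ival_nonempty
  exact disjoint_left.mp (stoppingTrees_pairwise_disjoint_top hT hT' hne)
    (T.le_top P hP hx) (T'.le_top P hP' hx)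

lemma exists_mem_stoppingTrees_of_mem_heavyTiles {P : Tile M} (hP : P ∈ heavyTiles a PP c) :
    ∃ T ∈ stoppingTrees a PP c, P ∈ T.tiles := by
  obtain ⟨Q, hPQ, hQ⟩ := Finite.exists_le_maximal (p := (· ∈ heavyTiles a PP c)) hP
  let T : Tree M := ⟨cTree Q ∩ PP, Q, ⟨(le_rfl : Q ≤ Q), hQ.prop.1⟩, fun _ hR => hR.1⟩
  exact ⟨T, ⟨hQ, rfl⟩, hPQ, hP.1⟩

lemma isConvex_stoppingRemainder (hconv : IsConvex PP) :
    IsConvex (stoppingRemainder a PP c) := by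
  intro P₁ hP₁ P₂ hP₂ P hle₁ hle₂
  refine ⟨hconv P₁ hP₁.1 P₂ hP₂.1 P hle₁ hle₂, fun hP => ?_⟩
  obtain ⟨T, hT, hPT⟩ := mem_iUnion₂.mp hP
  have hP₁T : P₁ ∈ T.tiles := hT.2 ▸ ⟨le_trans hle₁ (T.le_top P hPT), hP₁.1⟩
  exact hP₁.2 (mem_biUnion hT hP₁T)

lemma maxSize_stoppingRemainder_le (ha : ∀ P, 0 ≤ a P) (hc : 0 ≤ c) :
    maxSize a (stoppingRemainder a PP c) ≤ c := by
  refine maxSize_le hc fun T hT _ => ?_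
  have htop := hT T.top_mem
  have hlight : T.top ∉ heavyTiles a PP c := fun hheavy =>
    let ⟨T', hT', htopT'⟩ := exists_mem_stoppingTrees_of_mem_heavyTiles hheavy
    htop.2 (mem_biUnion hT' htopT')
  have hlt : completeTreeSize a PP T.top < c := lt_of_not_ge fun h => hlight ⟨htop.1, h⟩
  exact (treeSize_le_completeTreeSize ha (hT.trans sdiff_subset)).trans hlt.le

lemma le_treeSize_of_mem_stoppingTrees {T : Tree M} (hT : T ∈ stoppingTrees a PP c) :
    c ≤ treeSize a T :=
  hT.2.treeSize_eq a ▸ hT.1.prop.2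

end StoppingTrees

/-- Lemma 5.1: Calderón–Zygmund decomposition for size. -/
theorem statement7 (M : ℕ) (n : ℤ) (PPn : Set (Tile M)) (a : Tile M → ℝ)
    (ha : ∀ P, 0 ≤ a P) (hconv : IsConvex PPn)
    (hsize : maxSize a PPn ≤ 2 ^ n) :
    ∃ (TT : Set (Tree M)) (PP' : Set (Tile M)),
      PPn = (⋃ T ∈ TT, T.tiles) ∪ PP' ∧
      (TT.Pairwise fun T T' => Disjoint T.tiles T'.tiles) ∧
      (∀ T ∈ TT, Disjoint T.tiles PP') ∧
      IsConvex PP' ∧ maxSize a PP' ≤ 2 ^ (n - 1) ∧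
      (∀ T ∈ TT, T.tiles ⊆ PPn ∧ IsConvex T.tiles) ∧
      (TT.Pairwise fun T T' => Disjoint T.top.ival T'.top.ival) ∧
      (∀ T ∈ TT, (2 : ℝ) ^ (n - 1) ≤ treeSize a T ∧
        treeSize a T ≤ maxSize a T.tiles ∧ maxSize a T.tiles ≤ 2 ^ n) := by
  set c : ℝ := 2 ^ (n - 1)
  refine ⟨stoppingTrees a PPn c, stoppingRemainder a PPn c,
    (union_sdiff_cancel biUnion_stoppingTrees_subset).symm,
    stoppingTrees_pairwise_disjoint_tiles,
    fun T hT => disjoint_sdiff_right.mono_left (subset_biUnion_of_mem hT),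
    isConvex_stoppingRemainder hconv, maxSize_stoppingRemainder_le ha (by positivity),
    fun T hT => ⟨hT.2.subset, hT.2.isConvex hconv⟩,
    stoppingTrees_pairwise_disjoint_top, fun T hT => ⟨?_, ?_, ?_⟩⟩
  · exact le_treeSize_of_mem_stoppingTrees hT
  · exact treeSize_le_maxSize a subset_rfl (hT.2.isConvex hconv)
  · exact (maxSize_mono a hT.2.subset).trans hsize

end Dyadic
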